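/- Let f : ℝ^d → ℝ be differentiable, μ-strongly convex, and have L-Lipschitz gradient. Then for all x, y, z in ℝ^d and any β > 0: ⟨∇f(x), z − y⟩ ≤ f(z) − f(y) + (L + βL − μ/4)‖y − z‖² + (1 + 1/β)L‖z − x‖². -/
import Mathlib


open scoped RealInnerProductSpace

theorem inner_grad_upper_bound_beta {d : ℕ} (f : EuclideanSpace ℝ (Fin d) → ℝ)
    (g : EuclideanSpace ℝ (Fin d) → EuclideanSpace ℝ (Fin d)) (μ L : ℝ)
    (hμ : 0 < μ) (hL : 0 < L)
    (hgrad : ∀ x, HasGradientAt f (g x) x)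
    (hsc : ∀ x y, f y ≥ f x + ⟪g x, y - x⟫ + μ / 2 * ‖x - y‖ ^ 2)
    (hlip : ∀ x y, ‖g x - g y‖ ≤ L * ‖x - y‖) :
    ∀ x y z, ∀ β : ℝ, 0 < β →
      ⟪g x, z - y⟫ ≤ f z - f y + (L + β * L - μ / 4) * ‖y - z‖ ^ 2
        + (1 + 1 / β) * L * ‖z - x‖ ^ 2 := by
  intro x y z β hβ
  have h1 := hsc y z
  -- h1 : f z ≥ f y + ⟪g y, z - y⟫ + μ/2 ‖y - z‖²
  have hsplit : ⟪g x, z - y⟫ = ⟪g y, z - y⟫ + ⟪g x - g y, z - y⟫ := by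
    rw [inner_sub_left]; ring
  have h2 : ⟪g x - g y, z - y⟫ ≤ ‖g x - g y‖ * ‖z - y‖ := real_inner_le_norm _ _
  have h3 : ‖g x - g y‖ ≤ L * ‖x - y‖ := hlip x y
  have htri : ‖x - y‖ ≤ ‖x - z‖ + ‖z - y‖ := by
    simpa [dist_eq_norm] using dist_triangle x z y
  have hA : ‖z - y‖ = ‖y - z‖ := norm_sub_rev _ _
  have hB : ‖x - z‖ = ‖z - x‖ := norm_sub_rev _ _
  have hzy : (0:ℝ) ≤ ‖z - y‖ := norm_nonneg _
  have hyz : (0:ℝ) ≤ ‖y - z‖ := norm_nonneg _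
  have hzx : (0:ℝ) ≤ ‖z - x‖ := norm_nonneg _
  have h4 : ⟪g x - g y, z - y⟫ ≤ L * (‖z - x‖ + ‖y - z‖) * ‖y - z‖ := by
    calc ⟪g x - g y, z - y⟫ ≤ ‖g x - g y‖ * ‖z - y‖ := h2
    _ ≤ (L * ‖x - y‖) * ‖z - y‖ := mul_le_mul_of_nonneg_right h3 hzy
    _ ≤ (L * (‖x - z‖ + ‖z - y‖)) * ‖z - y‖ := by
        apply mul_le_mul_of_nonneg_right _ hzy
        exact mul_le_mul_of_nonneg_left htri hL.le
    _ = L * (‖z - x‖ + ‖y - z‖) * ‖y - z‖ := by rw [hA, hB]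
  have hβ' : (1 / β) * β = 1 := by field_simp
  have key : L * (‖z - x‖ + ‖y - z‖) * ‖y - z‖ ≤ (L + β * L + μ / 4) * ‖y - z‖ ^ 2
      + (1 + 1 / β) * L * ‖z - x‖ ^ 2 := by
    have hsq : 0 ≤ (L / β) * (β * ‖y - z‖ - ‖z - x‖) ^ 2 := by positivity
    have hexp : (L / β) * (β * ‖y - z‖ - ‖z - x‖) ^ 2
        = L * β * ‖y - z‖ ^ 2 - 2 * (L * ‖z - x‖ * ‖y - z‖) + (1 / β) * L * ‖z - x‖ ^ 2 := by
      field_simp; ring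
    rw [hexp] at hsq
    nlinarith [sq_nonneg (‖y - z‖), sq_nonneg (‖z - x‖), mul_nonneg hμ.le (sq_nonneg (‖y - z‖)),
      mul_nonneg (mul_nonneg hβ.le hL.le) (sq_nonneg (‖y - z‖)),
      mul_nonneg hL.le (sq_nonneg (‖z - x‖))]
  have hszy : ⟪g y, z - y⟫ ≤ f z - f y - μ / 2 * ‖y - z‖ ^ 2 := by linarith [h1]
  rw [hsplit]
  nlinarith [mul_nonneg hμ.le (sq_nonneg (‖y - z‖))]
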